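/- Let U be a split-filtered associative unital ring with exhaustive filtration, and let X ⊆ U be an additive subgroup which is a split-filtered subgroup: writing X_{≤n} := X ∩ U_{≤n} and X'_n := X ∩ U'_n, assume X = ⋃_n X_{≤n} and X_{≤n} = X'_n + X_{≤n−1} for all n. Let I := UXU be the two-sided ideal of U generated by X, and let I' be the two-sided ideal of the graded subring U' generated by X' := Σ_n X'_n. Then I is split-filtered with the restricted filtration I ∩ U_{≤n} and with splitting subgroups I'_n := I' ∩ U'_n: for every n, I ∩ U_{≤n} is the internal direct sum of I'_n and I ∩ U_{≤n−1}. -/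

import Mathlib

/-!
Decomposing `u`, `x`, `v` into a homogeneous part (in `U'`, resp. `X'`) plus a part of
arbitrarily low filtration degree shows that every generator `u x v` of `I`, hence all of `I`,
lies in `Σₘ (I' ∩ U'ₘ) + I_{≤c}` for every `c`. Taking `c = n - 1`, an element of `I_{≤n}` is a
finite sum of homogeneous elements of `I'` plus an element of `I_{≤n-1}`; since `U'ₘ` meets
`U_{≤m-1}` trivially, the components of degree `> n` vanish, and the component of degree `n`
lies in `I'ₙ`.
-/

/-- A split-filtered ring: a ring `R` with an increasing filtration `F n` satisfying
`F p * F q ⊆ F (p+q)`, together with splitting subgroups `P n ≤ F n` with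
`P p * P q ⊆ P (p+q)` such that each `F n` is the internal direct sum of `P n` and
`F (n-1)`. -/
structure SplitFilteredRing (R : Type) [Ring R] where
  F : ℤ → AddSubgroup R
  P : ℤ → AddSubgroup R
  mono : ∀ n : ℤ, F n ≤ F (n + 1)
  P_le_F : ∀ n : ℤ, P n ≤ F n
  sup_eq : ∀ n : ℤ, F n = P n ⊔ F (n - 1)
  inf_eq : ∀ n : ℤ, P n ⊓ F (n - 1) = ⊥
  mul_mem : ∀ (p q : ℤ) (x y : R), x ∈ F p → y ∈ F q → x * y ∈ F (p + q)
  P_mul_mem : ∀ (p q : ℤ) (x y : R), x ∈ P p → y ∈ P q → x * y ∈ P (p + q)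

/-- The two-sided ideal `I = U X U` of the (unital) ring `U` generated by a subset
carried by the additive subgroup `X`. -/
def idealGen {R : Type} [Ring R] (X : AddSubgroup R) : AddSubgroup R :=
  AddSubgroup.closure {y | ∃ u v : R, ∃ x ∈ X, y = u * x * v}

/-- The two-sided ideal of the (possibly nonunital) graded subring `U'` generated by
a subset carried by the additive subgroup `X'` (with `U'` given by an additive
subgroup which is closed under multiplication). -/
def idealGenIn {R : Type} [Ring R] (U' X' : AddSubgroup R) : AddSubgroup R :=
  AddSubgroup.closure
    ({y | y ∈ X'} ∪ {y | ∃ u ∈ U', ∃ x ∈ X', y = u * x} ∪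
      {y | ∃ x ∈ X', ∃ v ∈ U', y = x * v} ∪
      {y | ∃ u ∈ U', ∃ x ∈ X', ∃ v ∈ U', y = u * x * v})

theorem le_iSup_inf_sup_of_eq_sup {α : Type*} [CompleteLattice α] {G Q : ℤ → α}
    (h : ∀ n, G n = Q n ⊔ G (n - 1)) {c p : ℤ} (hcp : c ≤ p) :
    G p ≤ ((⨆ m, Q m) ⊓ G p) ⊔ G c := by
  have hQ : ∀ n, Q n ≤ G n := fun n => (h n).symm ▸ le_sup_left
  have hmono : ∀ n, G n ≤ G (n + 1) := fun n => by
    rw [h (n + 1), add_sub_cancel_right]; exact le_sup_right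
  induction p, hcp using Int.leInduction with
  | base => exact le_sup_right
  | succ k _ ih =>
    calc G (k + 1) = Q (k + 1) ⊔ G k := by rw [h (k + 1), add_sub_cancel_right]
      _ ≤ ((⨆ m, Q m) ⊓ G (k + 1)) ⊔ G c := by
        refine sup_le (le_sup_of_le_left (le_inf (le_iSup Q (k + 1)) (hQ (k + 1)))) ?_
        exact ih.trans (sup_le_sup_right (inf_le_inf_left _ (hmono k)) _)

theorem AddSubgroup.mem_iSup_iff_exists_finsupp {ι M : Type*} [AddCommGroup M]
    (A : ι → AddSubgroup M) (w : M) :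
    w ∈ ⨆ i, A i ↔ ∃ f : ι →₀ M, (∀ i, f i ∈ A i) ∧ (f.sum fun _ x => x) = w := by
  have := Submodule.mem_iSup_iff_exists_finsupp (fun i => (A i).toIntSubmodule) w
  rwa [← AddSubgroup.toIntSubmodule.map_iSup] at this

theorem AddSubgroup.mul_mul_mem_of_mem_iSup {ι R : Type*} [NonUnitalNonAssocRing R]
    {A B C : ι → AddSubgroup R} {S : AddSubgroup R}
    (h : ∀ i j k, ∀ a ∈ A i, ∀ b ∈ B j, ∀ c ∈ C k, a * b * c ∈ S)
    {a b c : R} (ha : a ∈ ⨆ i, A i) (hb : b ∈ ⨆ j, B j) (hc : c ∈ ⨆ k, C k) :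
    a * b * c ∈ S := by
  refine AddSubgroup.iSup_induction A (C := fun a => a * b * c ∈ S) ha (fun i a ha => ?_)
    (by simp) fun _ _ h₁ h₂ => by simpa [add_mul] using add_mem h₁ h₂
  refine AddSubgroup.iSup_induction B (C := fun b => a * b * c ∈ S) hb (fun j b hb => ?_)
    (by simp) fun _ _ h₁ h₂ => by simpa [mul_add, add_mul] using add_mem h₁ h₂
  refine AddSubgroup.iSup_induction C (C := fun c => a * b * c ∈ S) hc (fun k c hc => ?_)
    (by simp) fun _ _ h₁ h₂ => by simpa [mul_add] using add_mem h₁ h₂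
  exact h i j k a ha b hb c hc

namespace SplitFilteredRing

variable {R : Type} [Ring R] (U : SplitFilteredRing R)

theorem F_mono : Monotone U.F := monotone_int_of_le_succ U.mono

theorem eq_zero_of_sum_mem_F {f : ℤ → R} (hf : ∀ m, f m ∈ U.P m) (s : Finset ℤ) {n : ℤ}
    (hs : ∑ m ∈ s, f m ∈ U.F n) : ∀ m ∈ s, n < m → f m = 0 := by
  induction s using Finset.induction_on_max generalizing n with
  | empty => simp
  | insert a s hlt ih =>
    rw [Finset.sum_insert fun has => (hlt a has).false] at hs
    by_cases hna : n < a
    · have hsF : ∑ m ∈ s, f m ∈ U.F (a - 1) :=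
        sum_mem fun m hm => U.F_mono (by linarith [hlt m hm]) (U.P_le_F m (hf m))
      have hfa : f a = 0 := by
        have hmem : f a ∈ U.P a ⊓ U.F (a - 1) :=
          ⟨hf a, by simpa using sub_mem (U.F_mono (by omega) hs) hsF⟩
        rwa [U.inf_eq a] at hmem
      rw [hfa, zero_add] at hs
      intro m hm hnm
      rcases Finset.mem_insert.1 hm with rfl | hm
      exacts [hfa, ih hs m hm hnm]
    · intro m hm hnm
      rcases Finset.mem_insert.1 hm with rfl | hm
      exacts [absurd hnm hna, absurd (hnm.trans (hlt m hm)) hna]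

theorem iSup_inf_F_le {A : ℤ → AddSubgroup R} (hA : ∀ m, A m ≤ U.P m) (n : ℤ) :
    (⨆ m, A m) ⊓ U.F n ≤ A n ⊔ ((⨆ m, A m) ⊓ U.F (n - 1)) := by
  rintro _ ⟨hw, hwF⟩
  obtain ⟨f, hfA, rfl⟩ := (AddSubgroup.mem_iSup_iff_exists_finsupp A _).1 hw
  set s := insert n f.support
  have hsum : (f.sum fun _ x => x) = ∑ m ∈ s, f m :=
    Finsupp.sum_of_support_subset f (Finset.subset_insert n _) _ fun _ _ => rfl
  rw [hsum] at hwF ⊢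
  have hvanish := U.eq_zero_of_sum_mem_F (fun m => hA m (hfA m)) s hwF
  rw [← Finset.add_sum_erase s f (Finset.mem_insert_self n _)]
  refine AddSubgroup.add_mem_sup (hfA n)
    ⟨sum_mem fun m _ => AddSubgroup.mem_iSup_of_mem m (hfA m), sum_mem fun m hm => ?_⟩
  obtain ⟨hmn, hm⟩ := Finset.mem_erase.1 hm
  rcases lt_or_gt_of_ne hmn with hlt | hgt
  · exact U.F_mono (by omega) (U.P_le_F m (hA m (hfA m)))
  · rw [hvanish m hm hgt]; exact zero_mem _

def gradedIdeal (X : AddSubgroup R) : AddSubgroup R :=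
  idealGenIn (⨆ m, U.P m) (⨆ m, X ⊓ U.P m)

theorem gradedIdeal_le_idealGen (X : AddSubgroup R) : U.gradedIdeal X ≤ idealGen X := by
  have hX : (⨆ m, X ⊓ U.P m) ≤ X := iSup_le fun _ => inf_le_left
  rw [gradedIdeal, idealGenIn, AddSubgroup.closure_le]
  rintro _ (((hx | ⟨u, -, x, hx, rfl⟩) | ⟨x, hx, v, -, rfl⟩) | ⟨u, -, x, hx, v, -, rfl⟩)
  · exact AddSubgroup.subset_closure ⟨1, 1, _, hX hx, by simp⟩
  · exact AddSubgroup.subset_closure ⟨u, 1, x, hX hx, by simp⟩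
  · exact AddSubgroup.subset_closure ⟨1, v, x, hX hx, by simp⟩
  · exact AddSubgroup.subset_closure ⟨u, v, x, hX hx, rfl⟩

theorem mul_mul_mem_iSup_gradedIdeal_inf_P (X : AddSubgroup R) {a b c : R}
    (ha : a ∈ ⨆ m, U.P m) (hb : b ∈ ⨆ m, X ⊓ U.P m) (hc : c ∈ ⨆ m, U.P m) :
    a * b * c ∈ ⨆ m, U.gradedIdeal X ⊓ U.P m := by
  refine AddSubgroup.mul_mul_mem_of_mem_iSup (fun i j k a ha b hb c hc => ?_) ha hb hc
  refine AddSubgroup.mem_iSup_of_mem (i + j + k) ⟨AddSubgroup.subset_closure (Or.inr ?_),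
    U.P_mul_mem _ _ _ _ (U.P_mul_mem _ _ _ _ ha hb.2) hc⟩
  exact ⟨a, AddSubgroup.mem_iSup_of_mem i ha, b, AddSubgroup.mem_iSup_of_mem j hb, c,
    AddSubgroup.mem_iSup_of_mem k hc, rfl⟩

theorem mul_mul_mem_idealGen_inf_F {X : AddSubgroup R} {a b c : R} {i j k n : ℤ}
    (ha : a ∈ U.F i) (hb : b ∈ X ⊓ U.F j) (hc : c ∈ U.F k) (hn : i + j + k ≤ n) :
    a * b * c ∈ idealGen X ⊓ U.F n :=
  ⟨AddSubgroup.subset_closure ⟨a, c, b, hb.1, rfl⟩,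
    U.F_mono hn (U.mul_mem _ _ _ _ (U.mul_mem _ _ _ _ ha hb.2) hc)⟩

theorem idealGen_le_iSup_sup (hexh : ∀ x : R, ∃ n : ℤ, x ∈ U.F n) (X : AddSubgroup R)
    (hX : ∀ n : ℤ, X ⊓ U.F n = (X ⊓ U.P n) ⊔ (X ⊓ U.F (n - 1))) (n : ℤ) :
    idealGen X ≤ (⨆ m, U.gradedIdeal X ⊓ U.P m) ⊔ (idealGen X ⊓ U.F n) := by
  rw [idealGen, AddSubgroup.closure_le]
  rintro _ ⟨u, v, x, hxX, rfl⟩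
  obtain ⟨p, hu⟩ := hexh u
  obtain ⟨q, hx⟩ := hexh x
  obtain ⟨r, hv⟩ := hexh v
  set d := max p (max q r)
  replace hu := U.F_mono (by omega : p ≤ d) hu
  replace hx : x ∈ X ⊓ U.F d := ⟨hxX, U.F_mono (by omega : q ≤ d) hx⟩
  replace hv := U.F_mono (by omega : r ≤ d) hv
  -- `c` is low enough that every product with a factor in `F c` has degree `≤ n`
  set c := min d (n - 2 * d)
  have hcd : c ≤ d := min_le_left _ _
  obtain ⟨u₁, ⟨hu₁P, hu₁F⟩, u₀, hu₀, rfl⟩ :=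
    AddSubgroup.mem_sup.1 (le_iSup_inf_sup_of_eq_sup U.sup_eq hcd hu)
  obtain ⟨x₁, ⟨hx₁P, hx₁F⟩, x₀, hx₀, rfl⟩ :=
    AddSubgroup.mem_sup.1 (le_iSup_inf_sup_of_eq_sup hX hcd hx)
  obtain ⟨v₁, ⟨hv₁P, hv₁F⟩, v₀, hv₀, rfl⟩ :=
    AddSubgroup.mem_sup.1 (le_iSup_inf_sup_of_eq_sup U.sup_eq hcd hv)
  have hexpand : (u₁ + u₀) * (x₁ + x₀) * (v₁ + v₀) =
      u₁ * x₁ * v₁ + (u₁ * x₁ * v₀ + u₁ * x₀ * (v₁ + v₀) + u₀ * (x₁ + x₀) * (v₁ + v₀)) := by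
    noncomm_ring
  rw [hexpand]
  refine AddSubgroup.add_mem_sup (U.mul_mul_mem_iSup_gradedIdeal_inf_P X hu₁P hx₁P hv₁P)
    (add_mem (add_mem ?_ ?_) ?_)
  · exact U.mul_mul_mem_idealGen_inf_F hu₁F hx₁F hv₀ (by omega)
  · exact U.mul_mul_mem_idealGen_inf_F hu₁F hx₀ hv (by omega)
  · exact U.mul_mul_mem_idealGen_inf_F hu₀ hx hv (by omega)

end SplitFilteredRing

/-- if `X` is a split-filtered additive subgroup of a split-filtered
associative unital ring `U` with exhaustive filtration, then the two-sided ideal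
`I = UXU` generated by `X` is split-filtered, with restricted filtration `I ∩ U_{≤n}`
and splitting subgroups `I'ₙ = I' ∩ U'ₙ`, where `I'` is the two-sided ideal of the
graded subring `U' = Σₙ U'ₙ` generated by `X' = Σₙ X'ₙ`. -/
theorem ideal_split_filtered {R : Type} [Ring R] (U : SplitFilteredRing R)
    (hexh : ∀ x : R, ∃ n : ℤ, x ∈ U.F n)
    (X : AddSubgroup R)
    (hX_split : ∀ n : ℤ, X ⊓ U.F n = (X ⊓ U.P n) ⊔ (X ⊓ U.F (n - 1))) :
    ∀ n : ℤ,
      (idealGenIn (⨆ m : ℤ, U.P m) (⨆ m : ℤ, X ⊓ U.P m) ⊓ U.P n) ≤ idealGen X ⊓ U.F n ∧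
      idealGen X ⊓ U.F n =
        (idealGenIn (⨆ m : ℤ, U.P m) (⨆ m : ℤ, X ⊓ U.P m) ⊓ U.P n) ⊔
          (idealGen X ⊓ U.F (n - 1)) ∧
      (idealGenIn (⨆ m : ℤ, U.P m) (⨆ m : ℤ, X ⊓ U.P m) ⊓ U.P n) ⊓
          (idealGen X ⊓ U.F (n - 1)) = ⊥ := by
  intro n
  have hI'I := U.gradedIdeal_le_idealGen X
  have hle : U.gradedIdeal X ⊓ U.P n ≤ idealGen X ⊓ U.F n := inf_le_inf hI'I (U.P_le_F n)
  refine ⟨hle, le_antisymm ?_ (sup_le hle (inf_le_inf_left _ (U.F_mono (by omega)))), ?_⟩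
  · intro z hz
    obtain ⟨hzI, hzF⟩ := AddSubgroup.mem_inf.1 hz
    obtain ⟨w, hw, r, hr, rfl⟩ :=
      AddSubgroup.mem_sup.1 (U.idealGen_le_iSup_sup hexh X hX_split (n - 1) hzI)
    have hwF : w ∈ U.F n := by simpa using sub_mem hzF (U.F_mono (by omega) hr.2)
    obtain ⟨a, ha, b, ⟨hb, hbF⟩, rfl⟩ :=
      AddSubgroup.mem_sup.1 (U.iSup_inf_F_le (fun m => inf_le_right) n ⟨hw, hwF⟩)
    have hbI : b ∈ idealGen X := iSup_le (fun m => inf_le_left.trans hI'I) hb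
    rw [add_assoc]
    exact AddSubgroup.add_mem_sup ha (add_mem ⟨hbI, hbF⟩ hr)
  · rw [eq_bot_iff, ← U.inf_eq n]
    exact inf_le_inf inf_le_right inf_le_right
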